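/- Let B be a reduced commutative ℂ-algebra, let 0 → I → E →^h Ω_{B/ℂ} → 0 be an extension of B-modules, and let O = B ×_{Ω_{B/ℂ}} E = {(f, a) ∈ B × E : h(a) = df} with multiplication (f, a)·(f′, a′) = (ff′, fa′ + f′a). The derivation d′ : O → E, (f, a) ↦ a, induces a B-linear map Ω_{O/ℂ} ⊗_O B → E via the universal property of Kähler differentials. This induced map is an isomorphism of B-modules. -/
import Mathlib


open TensorProduct

noncomputable section

set_option synthInstance.maxHeartbeats 1000000
set_option maxHeartbeats 2000000

/-- The fiber product `O = B ×_{Ω_{B/ℂ}} E = {(f, a) ∈ B × E : h(a) = df}`. -/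
abbrev FibAlg (B E : Type*) [CommRing B] [Algebra ℂ B] [AddCommGroup E] [Module B E]
    (h : E →ₗ[B] Ω[B⁄ℂ]) : Type _ :=
  {p : B × E // h p.2 = KaehlerDifferential.D ℂ B p.1}

/-- let `B` be a reduced commutative `ℂ`-algebra, `0 → I → E → Ω_{B/ℂ} → 0`
an extension of `B`-modules, and `O = B ×_{Ω_{B/ℂ}} E` the associated `ℂ`-algebra.  The
derivation `d′ : O → E`, `(f,a) ↦ a`, induces a `B`-linear map `Ω_{O/ℂ} ⊗_O B → E`, which
is an isomorphism of `B`-modules.  (Here `B` is an `O`-algebra via the projection `π`.) -/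
theorem stmt6 (B I E : Type*) [CommRing B] [Algebra ℂ B] [IsReduced B]
    [AddCommGroup I] [Module B I] [AddCommGroup E] [Module B E]
    (l : I →ₗ[B] E) (h : E →ₗ[B] Ω[B⁄ℂ])
    (hl : Function.Injective l) (hh : Function.Surjective h)
    (hex : Function.Exact l h)
    -- `O` is endowed with its commutative `ℂ`-algebra structure
    (ringO : CommRing (FibAlg B E h)) (algO : Algebra ℂ (FibAlg B E h))
    (hone : ((1 : FibAlg B E h) : B × E) = (1, 0))
    (hadd : ∀ p q : FibAlg B E h, ((p + q : FibAlg B E h) : B × E) = p.val + q.val)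
    (hmul : ∀ p q : FibAlg B E h, ((p * q : FibAlg B E h) : B × E) =
      (p.val.1 * q.val.1, p.val.1 • q.val.2 + q.val.1 • p.val.2))
    (halg : ∀ c : ℂ, ((algebraMap ℂ (FibAlg B E h) c : FibAlg B E h) : B × E) =
      (algebraMap ℂ B c, 0))
    -- `B` is an `O`-algebra via the projection
    (π : FibAlg B E h →+* B) (hπ : ∀ p : FibAlg B E h, π p = p.val.1) :
    letI : Algebra (FibAlg B E h) B := π.toAlgebra
    -- the map induced by `d′ : O → E`, `(f,a) ↦ a`, on `Ω_{O/ℂ} ⊗_O B`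
    -- is an isomorphism of `B`-modules
    ∃ e : (B ⊗[FibAlg B E h] KaehlerDifferential ℂ (FibAlg B E h)) ≃ₗ[B] E,
      ∀ (b : B) (o : FibAlg B E h),
        e (b ⊗ₜ[FibAlg B E h] KaehlerDifferential.D ℂ (FibAlg B E h) o) = b • o.val.2 := by
  classical
  letI : Algebra (FibAlg B E h) B := π.toAlgebra
  have halgmap : ∀ o : (FibAlg B E h), algebraMap (FibAlg B E h) B o = o.val.1 := fun o => hπ o
  haveI : IsScalarTower ℂ (FibAlg B E h) B := IsScalarTower.of_algebraMap_eq fun c => by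
    rw [halgmap, halg]
  letI : Module (FibAlg B E h) E := Module.compHom E (π : (FibAlg B E h) →+* B)
  have hosmul : ∀ (o : (FibAlg B E h)) (e : E), o • e = o.val.1 • e := fun o e => by
    show π o • e = _; rw [hπ]
  haveI : IsScalarTower (FibAlg B E h) B E := ⟨fun o b e => by
    rw [hosmul, Algebra.smul_def, halgmap, mul_smul]⟩
  letI : Module ℂ E := Module.compHom E (algebraMap ℂ B)
  have hcsmul : ∀ (c : ℂ) (e : E), c • e = algebraMap ℂ B c • e := fun c e => rfl
  haveI : IsScalarTower ℂ B E := ⟨fun c b e => by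
    rw [hcsmul, Algebra.smul_def, mul_smul]⟩
  haveI : IsScalarTower ℂ (FibAlg B E h) E := ⟨fun c o e => by
    rw [hcsmul, hosmul, hosmul, Algebra.smul_def c o, hmul, halg, mul_smul]⟩
  -- the derivation d' : (FibAlg B E h) → E
  have hsmul2 : ∀ (c : ℂ) (o : (FibAlg B E h)), (c • o).val.2 = c • o.val.2 := by
    intro c o
    rw [Algebra.smul_def c o, hmul, halg]
    show (algebraMap ℂ B c • o.val.2 + o.val.1 • (0 : E)) = _
    rw [smul_zero, add_zero, hcsmul]
  let d' : Derivation ℂ (FibAlg B E h) E :=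
    { toFun := fun o => o.val.2
      map_add' := fun p q => by
        show ((p + q : FibAlg B E h)).val.2 = p.val.2 + q.val.2
        rw [hadd]; rfl
      map_smul' := fun c o => by
        show ((c • o : FibAlg B E h)).val.2 = c • o.val.2
        exact hsmul2 c o
      map_one_eq_zero' := by show (1 : (FibAlg B E h)).val.2 = 0; rw [hone]
      leibniz' := fun p q => by
        show (p * q).val.2 = p • q.val.2 + q • p.val.2
        rw [hmul, hosmul, hosmul] }
  have hd' : ∀ o : (FibAlg B E h), d' o = o.val.2 := fun _ => rfl
  let φ : (B ⊗[(FibAlg B E h)] Ω[(FibAlg B E h)⁄ℂ]) →ₗ[B] E := d'.liftKaehlerDifferential.liftBaseChange B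
  have hφ : ∀ (b : B) (o : (FibAlg B E h)), φ (b ⊗ₜ[(FibAlg B E h)] KaehlerDifferential.D ℂ (FibAlg B E h) o) = b • o.val.2 := by
    intro b o
    rw [LinearMap.liftBaseChange_tmul, Derivation.liftKaehlerDifferential_comp_D]
    rfl
  -- surjectivity
  have hI : ∀ a : E, h a = 0 → ∃ o : (FibAlg B E h), o.val.2 = a := by
    intro a ha
    exact ⟨⟨(0, a), by rw [ha, map_zero]⟩, rfl⟩
  have hsurj : Function.Surjective φ := by
    have hle : ∀ a : E, (∃ o : (FibAlg B E h), o.val.2 = a) → a ∈ LinearMap.range φ := by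
      rintro a ⟨o, rfl⟩
      exact ⟨1 ⊗ₜ KaehlerDifferential.D ℂ (FibAlg B E h) o, by rw [hφ, one_smul]⟩
    intro a
    -- h a is in the image of h restricted to range φ
    have : h a ∈ Submodule.map h (LinearMap.range φ) := by
      have hsp : h a ∈ Submodule.span B (Set.range (KaehlerDifferential.D ℂ B)) := by
        rw [KaehlerDifferential.span_range_derivation]; trivial
      refine Submodule.span_induction ?_ ?_ ?_ ?_ hsp
      · rintro _ ⟨f, rfl⟩
        obtain ⟨a', ha'⟩ := hh (KaehlerDifferential.D ℂ B f)
        refine ⟨a', hle a' ⟨⟨(f, a'), ha'⟩, rfl⟩, ha'⟩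
      · exact Submodule.zero_mem _
      · intro x y _ _ hx hy; exact Submodule.add_mem _ hx hy
      · intro b x _ hx; exact Submodule.smul_mem _ b hx
    obtain ⟨s, hs, hsa⟩ := this
    have : h (a - s) = 0 := by rw [map_sub, hsa, sub_self]
    obtain ⟨i, hi⟩ := (hex (a - s)).mp this
    obtain ⟨o, ho⟩ := hI (a - s) this
    have h1 : a - s ∈ LinearMap.range φ := hle _ ⟨o, ho⟩
    have := Submodule.add_mem _ h1 hs
    rw [sub_add_cancel] at this
    exact this
  -- the generators of B ⊗ Ω
  have hspan : (⊤ : Submodule B (B ⊗[(FibAlg B E h)] Ω[(FibAlg B E h)⁄ℂ])) =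
      Submodule.span B (Set.range fun o : (FibAlg B E h) => (1 : B) ⊗ₜ[(FibAlg B E h)] KaehlerDifferential.D ℂ (FibAlg B E h) o) := by
    refine le_antisymm ?_ le_top
    rintro x -
    induction x using TensorProduct.induction_on with
    | zero => exact Submodule.zero_mem _
    | add x y hx hy => exact Submodule.add_mem _ hx hy
    | tmul b ω =>
      have hω : ω ∈ Submodule.span (FibAlg B E h) (Set.range (KaehlerDifferential.D ℂ (FibAlg B E h))) := by
        rw [KaehlerDifferential.span_range_derivation]; trivial
      induction hω using Submodule.span_induction generalizing b with
      | mem x hx =>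
        obtain ⟨o, rfl⟩ := hx
        have : b ⊗ₜ[(FibAlg B E h)] KaehlerDifferential.D ℂ (FibAlg B E h) o =
            b • ((1 : B) ⊗ₜ[(FibAlg B E h)] KaehlerDifferential.D ℂ (FibAlg B E h) o) := by
          rw [TensorProduct.smul_tmul', smul_eq_mul, mul_one]
        rw [this]
        exact Submodule.smul_mem _ _ (Submodule.subset_span ⟨o, rfl⟩)
      | zero => rw [TensorProduct.tmul_zero]; exact Submodule.zero_mem _
      | add x y _ _ hx hy =>
        rw [TensorProduct.tmul_add]; exact Submodule.add_mem _ (hx b) (hy b)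
      | smul o x _ hx =>
        rw [← TensorProduct.smul_tmul]
        exact hx (o • b)
  -- h ∘ φ = mapBaseChange
  have hcomm : h.comp φ = KaehlerDifferential.mapBaseChange ℂ (FibAlg B E h) B := by
    apply LinearMap.ext
    intro x
    have hx : x ∈ Submodule.span B
        (Set.range fun o : (FibAlg B E h) => (1 : B) ⊗ₜ[(FibAlg B E h)] KaehlerDifferential.D ℂ (FibAlg B E h) o) := by
      rw [← hspan]; trivial
    induction hx using Submodule.span_induction with
    | mem x hx =>
      obtain ⟨o, rfl⟩ := hx
      rw [LinearMap.comp_apply, hφ, one_smul, o.property,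
        KaehlerDifferential.mapBaseChange_tmul, KaehlerDifferential.map_D, one_smul, halgmap]
    | zero => rw [map_zero, map_zero]
    | add x y _ _ hx hy => rw [map_add, map_add, hx, hy]
    | smul b x _ hx => rw [map_smul, map_smul, hx]
  -- surjectivity of algebraMap (FibAlg B E h) B
  have hπs : Function.Surjective (algebraMap (FibAlg B E h) B) := by
    intro f
    obtain ⟨a, ha⟩ := hh (KaehlerDifferential.D ℂ B f)
    exact ⟨⟨(f, a), ha⟩, halgmap _⟩
  -- injectivity
  have hinj : Function.Injective φ := by
    rw [← LinearMap.ker_eq_bot, LinearMap.ker_eq_bot']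
    intro x hx
    have h1 : KaehlerDifferential.mapBaseChange ℂ (FibAlg B E h) B x = 0 := by
      rw [← hcomm, LinearMap.comp_apply, hx, map_zero]
    obtain ⟨y, hy⟩ := (KaehlerDifferential.exact_kerCotangentToTensor_mapBaseChange ℂ (FibAlg B E h) B hπs x).mp h1
    obtain ⟨z, rfl⟩ := Ideal.toCotangent_surjective _ y
    rw [KaehlerDifferential.kerCotangentToTensor_toCotangent] at hy
    have hz1 : (z : (FibAlg B E h)).val.1 = 0 := by
      have := z.property
      rw [RingHom.mem_ker, halgmap] at this
      exact this
    have hz2 : (z : (FibAlg B E h)).val.2 = 0 := by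
      have := hx
      rw [← hy, hφ, one_smul] at this
      exact this
    have hz : (z : (FibAlg B E h)) = 0 := by
      have h0 : ((0 : FibAlg B E h) : B × E) = 0 := by
        have h00 := hadd 0 0
        rw [add_zero] at h00
        exact left_eq_add.mp h00
      apply Subtype.ext
      rw [h0, Prod.ext_iff]
      exact ⟨hz1, hz2⟩
    rw [← hy, hz]
    simp
  refine ⟨LinearEquiv.ofBijective φ ⟨hinj, hsurj⟩, fun b o => hφ b o⟩
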